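/- arXiv:1811.08280 — 4 statements merged into one kernel-verified Lean document; each statement's English description precedes it below -/
import Mathlib

section
/- (Riordan's recurrence for connected labelled graphs) Let C_k denote the number of connected labelled simple graphs on k vertices. Then for every p ≥ 2, C_p = Σ_{k=1}^{p-1} binom(p−2, k−1) · (2^k − 1) · C_k · C_{p−k}. -/
/-!
Fix vertices `a ≠ b` and, for a connected graph `G`, let `S` be the set of vertices reachable
from `a` by walks avoiding `b`. Then `G[S]` and `G[Sᶜ]` are connected, every edge leaving `S`
ends at `b`, and `b` has a neighbour in `S`. Conversely, connected graphs on `S` and on `Sᶜ`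
together with a nonempty set of neighbours of `b` in `S` glue to a connected graph with the same
`S`. So the connected graphs with a given `S` of size `k` number `C_k C_{p-k} (2^k - 1)`, and
there are `binom(p-2, k-1)` sets `S` of size `k` containing `a` but not `b`.
-/

open scoped Classical in
/-- `connectedLabelledGraphCount k` is the number of connected labelled simple graphs
on `k` vertices. -/
noncomputable def connectedLabelledGraphCount (k : ℕ) : ℕ :=
  Fintype.card {G : SimpleGraph (Fin k) // G.Connected}

namespace SimpleGraph

variable {V : Type*} {G : SimpleGraph V} {a b x y : V}

def componentAvoiding (G : SimpleGraph V) (a b : V) : Set V :=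
  {x | ∃ w : G.Walk a x, b ∉ w.support}

lemma start_mem_componentAvoiding (hab : a ≠ b) : a ∈ G.componentAvoiding a b :=
  ⟨Walk.nil, by simpa using hab.symm⟩

lemma avoided_notMem_componentAvoiding : b ∉ G.componentAvoiding a b :=
  fun ⟨w, hw⟩ => hw w.end_mem_support

lemma mem_componentAvoiding_of_adj (hx : x ∈ G.componentAvoiding a b) (hxy : G.Adj x y)
    (hyb : y ≠ b) : y ∈ G.componentAvoiding a b := by
  obtain ⟨w, hw⟩ := hx
  refine ⟨w.concat hxy, ?_⟩
  simp only [Walk.support_concat, List.mem_append, List.mem_singleton]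
  rintro (h | h)
  exacts [hw h, hyb h.symm]

lemma eq_of_adj_of_mem_componentAvoiding (hx : x ∈ G.componentAvoiding a b)
    (hy : y ∉ G.componentAvoiding a b) (hxy : G.Adj x y) : y = b := by
  by_contra h
  exact hy (mem_componentAvoiding_of_adj hx hxy h)

lemma Walk.end_mem_componentAvoiding (w : G.Walk x y) (hx : x ∈ G.componentAvoiding a b)
    (hw : b ∉ w.support) : y ∈ G.componentAvoiding a b := by
  induction w with
  | nil => exact hx
  | cons h w ih =>
    simp only [Walk.support_cons, List.mem_cons, not_or] at hw
    exact ih (mem_componentAvoiding_of_adj hx h fun e => hw.2 (e ▸ w.start_mem_support)) hw.2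

lemma exists_adj_mem_componentAvoiding (hab : a ≠ b) (hG : G.Connected) :
    ∃ x ∈ G.componentAvoiding a b, G.Adj x b := by
  obtain ⟨w⟩ := hG.preconnected a b
  obtain ⟨d, -, hd, hd'⟩ :=
    w.exists_boundary_dart _ (start_mem_componentAvoiding hab) avoided_notMem_componentAvoiding
  exact ⟨d.fst, hd, eq_of_adj_of_mem_componentAvoiding hd hd' d.adj ▸ d.adj⟩

lemma connected_induce_componentAvoiding (hab : a ≠ b) :
    (G.induce (G.componentAvoiding a b)).Connected := by
  classical
  refine induce_connected_of_patches a (start_mem_componentAvoiding hab) fun ⟨w, hw⟩ => ?_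
  refine ⟨{z | z ∈ w.support}, fun z hz => ?_, w.start_mem_support, w.end_mem_support,
    w.connected_induce_support.preconnected _ _⟩
  exact (w.takeUntil z hz).end_mem_componentAvoiding (start_mem_componentAvoiding hab)
    fun hb => hw (w.support_takeUntil_subset_support hz hb)

lemma exists_walk_avoided_support_notMem_componentAvoiding (hab : a ≠ b) (w : G.Walk x y)
    (hy : y = a) (hx : x ∉ G.componentAvoiding a b) :
    ∃ p : G.Walk x b, ∀ z ∈ p.support, z ∉ G.componentAvoiding a b := by
  induction w with
  | nil =>
    subst hy
    exact absurd (start_mem_componentAvoiding hab) hx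
  | @cons u v _ h w ih =>
    by_cases hub : u = b
    · subst hub
      exact ⟨Walk.nil, by simpa using hx⟩
    · obtain ⟨p, hp⟩ := ih hy fun hv => hx (mem_componentAvoiding_of_adj hv h.symm hub)
      refine ⟨Walk.cons h p, ?_⟩
      simp only [Walk.support_cons, List.mem_cons, forall_eq_or_imp]
      exact ⟨hx, hp⟩

lemma connected_induce_compl_componentAvoiding (hab : a ≠ b) (hG : G.Connected) :
    (G.induce (G.componentAvoiding a b)ᶜ).Connected := by
  refine induce_connected_of_patches b avoided_notMem_componentAvoiding fun hv => ?_
  obtain ⟨p, hp⟩ := exists_walk_avoided_support_notMem_componentAvoiding hab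
    (hG.preconnected _ a).some rfl hv
  exact ⟨{z | z ∈ p.support}, hp, p.end_mem_support, p.start_mem_support,
    p.connected_induce_support.preconnected _ _⟩

section Glue

def glue (s : Set V) (b : V) (hb : b ∉ s) (C : SimpleGraph s) (D : SimpleGraph ↥sᶜ)
    (A : Set s) : SimpleGraph V where
  Adj x y := (∃ hx : x ∈ s, ∃ hy : y ∈ s, C.Adj ⟨x, hx⟩ ⟨y, hy⟩) ∨
    (∃ hx : x ∉ s, ∃ hy : y ∉ s, D.Adj ⟨x, hx⟩ ⟨y, hy⟩) ∨
    (y = b ∧ ∃ hx : x ∈ s, ⟨x, hx⟩ ∈ A) ∨ (x = b ∧ ∃ hy : y ∈ s, ⟨y, hy⟩ ∈ A)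
  symm := by
    refine ⟨?_⟩
    rintro x y (⟨hx, hy, h⟩ | ⟨hx, hy, h⟩ | ⟨rfl, h⟩ | ⟨rfl, h⟩)
    exacts [Or.inl ⟨hy, hx, h.symm⟩, Or.inr (Or.inl ⟨hy, hx, h.symm⟩),
      Or.inr (Or.inr (Or.inr ⟨rfl, h⟩)), Or.inr (Or.inr (Or.inl ⟨rfl, h⟩))]
  loopless := by
    refine ⟨?_⟩
    rintro x (⟨hx, _, h⟩ | ⟨hx, _, h⟩ | ⟨rfl, hx, _⟩ | ⟨rfl, hx, _⟩)
    exacts [C.loopless.irrefl _ h, D.loopless.irrefl _ h, hb hx, hb hx]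

variable {s : Set V} {C : SimpleGraph s} {D : SimpleGraph ↥sᶜ} {A : Set s} (hb : b ∉ s)

def glueHomLeft : C →g glue s b hb C D A :=
  ⟨Subtype.val, fun h => Or.inl ⟨_, _, h⟩⟩

lemma eq_avoided_of_glue_adj (hx : x ∈ s) (hy : y ∉ s)
    (h : (glue s b hb C D A).Adj x y) : y = b := by
  rcases h with ⟨_, hy', _⟩ | ⟨hx', _⟩ | ⟨rfl, _⟩ | ⟨rfl, _⟩
  exacts [absurd hy' hy, absurd hx hx', rfl, absurd hx hb]

lemma glue_adj_avoided_iff {x : s} : (glue s b hb C D A).Adj x b ↔ x ∈ A := by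
  refine ⟨?_, fun h => Or.inr (Or.inr (Or.inl ⟨rfl, x.2, h⟩))⟩
  rintro (⟨_, hb', _⟩ | ⟨hx, _⟩ | ⟨_, _, h⟩ | ⟨hx, _⟩)
  exacts [absurd hb' hb, absurd x.2 hx, h, absurd (hx ▸ x.2) hb]

lemma induce_glue : (glue s b hb C D A).induce s = C := by
  ext ⟨x, hx⟩ ⟨y, hy⟩
  refine ⟨?_, fun h => Or.inl ⟨hx, hy, h⟩⟩
  rintro (⟨_, _, h⟩ | ⟨hx', _⟩ | ⟨rfl, _⟩ | ⟨rfl, _⟩)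
  exacts [h, absurd hx hx', absurd hy hb, absurd hx hb]

lemma induce_compl_glue : (glue s b hb C D A).induce sᶜ = D := by
  ext ⟨x, hx⟩ ⟨y, hy⟩
  refine ⟨?_, fun h => Or.inr (Or.inl ⟨hx, hy, h⟩)⟩
  rintro (⟨hx', _⟩ | ⟨_, _, h⟩ | ⟨_, hx', _⟩ | ⟨_, hy', _⟩)
  exacts [absurd hx' hx, h, absurd hx' hx, absurd hy' hy]

lemma glue_connected (hC : C.Connected) (hD : D.Connected) (hA : A.Nonempty) :
    (glue s b hb C D A).Connected := by
  obtain ⟨a, ha⟩ := hA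
  have hCb : ∀ x : s, (glue s b hb C D A).Reachable x b := fun x =>
    ((hC.preconnected x a).map (glueHomLeft hb)).trans
      ((glue_adj_avoided_iff hb).2 ha).reachable
  have hDb : ∀ x : ↥sᶜ, (glue s b hb C D A).Reachable x b := fun x =>
    (hD.preconnected x ⟨b, hb⟩).map ⟨Subtype.val, fun h => Or.inr (Or.inl ⟨_, _, h⟩)⟩
  rw [connected_iff_exists_forall_reachable]
  refine ⟨b, fun x => ?_⟩
  by_cases hx : x ∈ s
  exacts [(hCb ⟨x, hx⟩).symm, (hDb ⟨x, hx⟩).symm]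

lemma componentAvoiding_glue (ha : a ∈ s) (hC : C.Connected) :
    (glue s b hb C D A).componentAvoiding a b = s := by
  refine Set.Subset.antisymm (fun x ⟨w, hw⟩ => ?_) fun x hx => ?_
  · by_contra hx
    obtain ⟨d, hd, hd₁, hd₂⟩ := w.exists_boundary_dart s ha hx
    have hdb := w.dart_snd_mem_support_of_mem_darts hd
    rw [eq_avoided_of_glue_adj hb hd₁ hd₂ d.adj] at hdb
    exact hw hdb
  · obtain ⟨w⟩ := hC.preconnected ⟨a, ha⟩ ⟨x, hx⟩
    refine ⟨w.map (glueHomLeft hb), fun hbw => ?_⟩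
    have hbw : b ∈ (w.map (glueHomLeft (D := D) (A := A) hb)).support := hbw
    rw [Walk.support_map, List.mem_map] at hbw
    obtain ⟨z, -, hz⟩ := hbw
    exact hb (hz ▸ z.2)

lemma glue_induce_self {G : SimpleGraph V} (hs : G.componentAvoiding a b = s) :
    glue s b hb (G.induce s) (G.induce sᶜ) {x | G.Adj x b} = G := by
  have hcross : ∀ {x y}, x ∈ s → y ∉ s → G.Adj x y → y = b := fun hx hy =>
    eq_of_adj_of_mem_componentAvoiding (hs ▸ hx) (hs ▸ hy)
  ext x y
  refine ⟨?_, fun h => ?_⟩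
  · rintro (⟨_, _, h⟩ | ⟨_, _, h⟩ | ⟨rfl, _, h⟩ | ⟨rfl, _, h⟩)
    exacts [h, h, h, h.symm]
  · by_cases hx : x ∈ s <;> by_cases hy : y ∈ s
    · exact Or.inl ⟨hx, hy, h⟩
    · obtain rfl := hcross hx hy h
      exact Or.inr (Or.inr (Or.inl ⟨rfl, hx, h⟩))
    · obtain rfl := hcross hy hx h.symm
      exact Or.inr (Or.inr (Or.inr ⟨rfl, hy, h.symm⟩))
    · exact Or.inr (Or.inl ⟨hx, hy, h⟩)

end Glue

def connectedComponentAvoidingEquiv {s : Set V} (ha : a ∈ s) (hb : b ∉ s) :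
    {G : SimpleGraph V // G.Connected ∧ G.componentAvoiding a b = s} ≃
      {C : SimpleGraph s // C.Connected} × {D : SimpleGraph ↥sᶜ // D.Connected} ×
        {A : Set s // A.Nonempty} where
  toFun := fun ⟨G, hG, hs⟩ =>
    have hab : a ≠ b := ne_of_mem_of_not_mem ha hb
    (⟨G.induce s, hs ▸ connected_induce_componentAvoiding hab⟩,
      ⟨G.induce sᶜ, hs ▸ connected_induce_compl_componentAvoiding hab hG⟩,
      ⟨{x | G.Adj x b}, by
        obtain ⟨x, hx, hxb⟩ := exists_adj_mem_componentAvoiding hab hG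
        exact ⟨⟨x, hs ▸ hx⟩, hxb⟩⟩)
  invFun X := ⟨glue s b hb X.1 X.2.1 X.2.2, glue_connected hb X.1.2 X.2.1.2 X.2.2.2,
    componentAvoiding_glue hb ha X.1.2⟩
  left_inv := fun ⟨_, _, hs⟩ => Subtype.ext (glue_induce_self hb hs)
  right_inv X := by
    exact Prod.ext (Subtype.ext (induce_glue hb)) (Prod.ext (Subtype.ext (induce_compl_glue hb))
      (Subtype.ext (Set.ext fun _ => glue_adj_avoided_iff hb)))

end SimpleGraph

open SimpleGraph Finset

lemma card_connected_eq_connectedLabelledGraphCount (α : Type*) [Finite α] :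
    Nat.card {G : SimpleGraph α // G.Connected} = connectedLabelledGraphCount (Nat.card α) := by
  classical
  have e := Finite.equivFin α
  rw [connectedLabelledGraphCount, ← Nat.card_eq_fintype_card]
  exact Nat.card_congr (e.simpleGraph.subtypeEquiv fun G => (Iso.comap e.symm G).connected_iff.symm)

lemma card_nonempty_set (α : Type*) [Finite α] :
    Nat.card {A : Set α // A.Nonempty} = 2 ^ Nat.card α - 1 := by
  have := Fintype.ofFinite α
  classical
  rw [Nat.card_eq_fintype_card, Nat.card_eq_fintype_card, ← Fintype.card_set]
  simp only [Set.nonempty_iff_ne_empty]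
  rw [Fintype.card_subtype_compl, Fintype.card_subtype_eq]

lemma card_connected_componentAvoiding_eq {V : Type*} [Finite V] {a b : V} {s : Set V}
    (ha : a ∈ s) (hb : b ∉ s) :
    Nat.card {G : SimpleGraph V // G.Connected ∧ G.componentAvoiding a b = s} =
      connectedLabelledGraphCount s.ncard * connectedLabelledGraphCount (Nat.card V - s.ncard) *
        (2 ^ s.ncard - 1) := by
  rw [Nat.card_congr (connectedComponentAvoidingEquiv ha hb), Nat.card_prod, Nat.card_prod,
    card_connected_eq_connectedLabelledGraphCount, card_connected_eq_connectedLabelledGraphCount,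
    card_nonempty_set, Nat.card_coe_set_eq, Nat.card_coe_set_eq, Set.ncard_compl, mul_assoc]

lemma card_connected_eq_sum_powerset {V : Type*} [Fintype V] [DecidableEq V] {a b : V}
    (hab : a ≠ b) :
    Nat.card {G : SimpleGraph V // G.Connected} =
      ∑ T ∈ ((univ.erase a).erase b).powerset,
        Nat.card {G : SimpleGraph V // G.Connected ∧ G.componentAvoiding a b = ↑(insert a T)} := by
  classical
  set f : {G : SimpleGraph V // G.Connected} → Finset V :=
    fun G => (G.1.componentAvoiding a b).toFinset.erase a
  have hf : ∀ G ∈ (univ : Finset {G : SimpleGraph V // G.Connected}),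
      f G ∈ ((univ.erase a).erase b).powerset := by
    intro G _
    refine mem_powerset.2 fun x hx => ?_
    have hb : x ≠ b := by
      rintro rfl
      exact avoided_notMem_componentAvoiding (Set.mem_toFinset.1 (mem_of_mem_erase hx))
    simpa [hb] using ne_of_mem_erase hx
  rw [Nat.card_eq_fintype_card, ← card_univ, card_eq_sum_card_fiberwise hf]
  refine sum_congr rfl fun T hT => ?_
  have haT : a ∉ T := fun h => by simpa using mem_powerset.1 hT h
  rw [← Fintype.card_subtype, ← Nat.card_eq_fintype_card,
    ← Nat.card_congr (Equiv.subtypeSubtypeEquivSubtypeInter _ _)]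
  refine Nat.card_congr (Equiv.subtypeEquivRight fun G => ?_)
  rw [erase_eq_iff_eq_insert (Set.mem_toFinset.2 (start_mem_componentAvoiding hab)) haT,
    ← coe_inj, Set.coe_toFinset]

lemma card_connected_eq_sum_choose {V : Type*} [Fintype V] [DecidableEq V] {a b : V}
    (hab : a ≠ b) :
    Nat.card {G : SimpleGraph V // G.Connected} =
      ∑ m ∈ range (Fintype.card V - 1), (Fintype.card V - 2).choose m •
        (connectedLabelledGraphCount (m + 1) *
          connectedLabelledGraphCount (Fintype.card V - (m + 1)) * (2 ^ (m + 1) - 1)) := by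
  have hR : #((univ.erase a).erase b) = Fintype.card V - 2 := by
    rw [card_erase_of_mem (mem_erase.2 ⟨hab.symm, mem_univ b⟩), card_erase_of_mem (mem_univ a),
      card_univ, Nat.sub_sub]
  have hV : Fintype.card V - 2 + 1 = Fintype.card V - 1 := by
    have := Fintype.one_lt_card_iff.2 ⟨a, b, hab⟩
    omega
  rw [card_connected_eq_sum_powerset hab, ← hV, ← hR, ← sum_powerset_apply_card]
  refine sum_congr rfl fun T hT => ?_
  have hTR : ∀ x ∈ T, x ≠ b ∧ x ≠ a := fun x hx => by simpa using mem_powerset.1 hT hx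
  have haT : a ∉ T := fun h => (hTR a h).2 rfl
  have hbT : b ∉ insert a T := by simpa [hab.symm] using fun h => (hTR b h).1 rfl
  rw [card_connected_componentAvoiding_eq (by simp) (by simpa using hbT), Set.ncard_coe_finset,
    card_insert_of_notMem haT, Nat.card_eq_fintype_card]

theorem riordan_recurrence_connected_graphs (p : ℕ) (hp : 2 ≤ p) :
    connectedLabelledGraphCount p =
      ∑ k ∈ Finset.Icc 1 (p - 1),
        (p - 2).choose (k - 1) * (2 ^ k - 1) * connectedLabelledGraphCount k *
          connectedLabelledGraphCount (p - k) := by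
  obtain ⟨n, rfl⟩ : ∃ n, p = n + 2 := ⟨p - 2, by omega⟩
  have key := card_connected_eq_sum_choose (V := Fin (n + 2)) zero_ne_one
  rw [card_connected_eq_connectedLabelledGraphCount, Nat.card_fin, Fintype.card_fin] at key
  rw [key, ← Ico_add_one_right_eq_Icc, sum_Ico_eq_sum_range]
  refine sum_congr (by simp) fun k _ => ?_
  rw [smul_eq_mul, Nat.add_sub_cancel_left, add_comm 1 k]
  ring
end

section
/- For every real number x with |x| < 1/4, the generating function identity Σ_{n=1}^{∞} f_n x^n = (1 − √(1 − 4x))/2 holds, where f_n = (1/n)·binom(2n−2, n−1) (the (n−1)-st Catalan number); i.e., the series Σ_{n≥1} (catalan (n−1)) · x^n is summable with sum (1 − Real.sqrt (1 − 4x))/2. -/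
/-! The series `C(t) = ∑ catalan n * t ^ (n + 1)` converges for `‖t‖ < 1/4` because
`catalan n ≤ 4 ^ n`, and the Cauchy product together with Segner's recurrence gives
`C(t) = t + C(t) ^ 2`. Hence `1 - 2 C(x) = ± √(1 - 4x)` for real `x`. The sign is `+`: the
function `1 - 2 C` is continuous on `(-1/4, 1/4)`, equals `1` at `0`, and cannot vanish there,
since `C(t) = 1/2` would force `t = 1/4`. -/

open Finset

theorem catalan_le_four_pow (n : ℕ) : catalan n ≤ 4 ^ n :=
  calc catalan n ≤ n.centralBinom := by
        rw [catalan_eq_centralBinom_div]; exact Nat.div_le_self _ _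
    _ ≤ 4 ^ n := Nat.centralBinom_le_four_pow n

section RCLike

variable {𝕜 : Type*} [RCLike 𝕜]

theorem summable_norm_catalan_mul_pow {t : 𝕜} (ht : ‖t‖ < 1 / 4) :
    Summable fun n : ℕ => ‖(catalan n : 𝕜) * t ^ (n + 1)‖ := by
  have hgeo : Summable fun n : ℕ => ‖t‖ * (4 * ‖t‖) ^ n :=
    (summable_geometric_of_lt_one (by positivity) (by linarith)).mul_left _
  refine .of_nonneg_of_le (fun _ => norm_nonneg _) (fun n => ?_) hgeo
  rw [norm_mul, norm_pow, RCLike.norm_natCast, mul_pow, pow_succ]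
  calc (catalan n : ℝ) * (‖t‖ ^ n * ‖t‖) ≤ 4 ^ n * (‖t‖ ^ n * ‖t‖) := by
        gcongr; exact_mod_cast catalan_le_four_pow n
    _ = ‖t‖ * (4 ^ n * ‖t‖ ^ n) := by ring

noncomputable def catalanGF (t : 𝕜) : 𝕜 :=
  ∑' n : ℕ, (catalan n : 𝕜) * t ^ (n + 1)

theorem hasSum_catalanGF {t : 𝕜} (ht : ‖t‖ < 1 / 4) :
    HasSum (fun n : ℕ => (catalan n : 𝕜) * t ^ (n + 1)) (catalanGF t) :=
  (summable_norm_catalan_mul_pow ht).of_norm.hasSum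

theorem catalanGF_eq_add_sq {t : 𝕜} (ht : ‖t‖ < 1 / 4) :
    catalanGF t = t + catalanGF t ^ 2 := by
  have hnorm := summable_norm_catalan_mul_pow ht
  have hsq : catalanGF t ^ 2 = ∑' n : ℕ, (catalan (n + 1) : 𝕜) * t ^ (n + 1 + 1) := by
    rw [sq, catalanGF, tsum_mul_tsum_eq_tsum_sum_antidiagonal_of_summable_norm hnorm hnorm]
    congr 1 with n
    rw [catalan_succ', Nat.cast_sum, sum_mul]
    refine sum_congr rfl fun ij hij => ?_
    rw [← mem_antidiagonal.mp hij]
    push_cast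
    ring
  rw [hsq, catalanGF, hnorm.of_norm.tsum_eq_zero_add, catalan_zero]
  simp

theorem continuousOn_catalanGF : ContinuousOn (catalanGF (𝕜 := 𝕜)) (Metric.ball 0 (1 / 4)) := by
  intro t ht
  obtain ⟨r, htr, hr⟩ := exists_between (mem_ball_zero_iff.mp ht)
  have hr₀ : 0 ≤ r := (norm_nonneg t).trans htr.le
  have hball : ContinuousOn catalanGF (Metric.closedBall (0 : 𝕜) r) := by
    refine continuousOn_tsum (fun n => (continuous_const.mul (continuous_pow _)).continuousOn)
      (summable_norm_catalan_mul_pow (t := (r : 𝕜)) ?_) fun n s hs => ?_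
    · rwa [RCLike.norm_ofReal, abs_of_nonneg hr₀]
    · rw [mem_closedBall_zero_iff] at hs
      simp only [norm_mul, norm_pow, RCLike.norm_ofReal, abs_of_nonneg hr₀]
      gcongr
  exact (hball.continuousAt (Metric.closedBall_mem_nhds_of_mem
    (mem_ball_zero_iff.mpr htr))).continuousWithinAt

end RCLike

theorem catalanGF_lt_half {x : ℝ} (hx : |x| < 1 / 4) : catalanGF x < 1 / 2 := by
  by_contra! h
  obtain ⟨t, ht, hhalf⟩ : 1 / 2 ∈ catalanGF '' Metric.ball (0 : ℝ) (1 / 4) :=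
    (convex_ball _ _).isPreconnected.intermediate_value (Metric.mem_ball_self (by norm_num))
      (mem_ball_zero_iff.mpr hx) continuousOn_catalanGF ⟨by simp [catalanGF], h⟩
  have hquad := catalanGF_eq_add_sq (mem_ball_zero_iff.mp ht)
  rw [hhalf] at hquad
  have : t = 1 / 4 := by linarith
  rw [mem_ball_zero_iff, this] at ht
  norm_num at ht

theorem catalan_generating_function (x : ℝ) (hx : |x| < 1 / 4) :
    HasSum (fun n : ℕ => (catalan n : ℝ) * x ^ (n + 1))
      ((1 - Real.sqrt (1 - 4 * x)) / 2) := by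
  have hquad := catalanGF_eq_add_sq (t := x) hx
  have hsqrt : Real.sqrt (1 - 4 * x) = 1 - 2 * catalanGF x := by
    rw [Real.sqrt_eq_iff_mul_self_eq (by linarith [(abs_lt.mp hx).2]) (by linarith [catalanGF_lt_half hx])]
    linear_combination 4 * hquad
  rw [hsqrt, show (1 - (1 - 2 * catalanGF x)) / 2 = catalanGF x by ring]
  exact hasSum_catalanGF hx
end

section
/- (Domination of the nonlinear SIS dynamics by the linear dynamics) Let N be a natural number, a : Fin N → Fin N → ℝ with values in {0,1}, and for each i let μ_i ∈ [0,1], β_i ≥ 0, r_i ≥ 0 with β_i·r_i ≤ 1. Suppose p : ℕ → Fin N → ℝ satisfies 0 ≤ p_i(t) ≤ 1 for all i, t and the recursion p_i(t+1) = (1 − μ_i)·p_i(t) + (1 − ∏_j (1 − a_{ij} β_i r_i p_j(t)))·(1 − p_i(t)), and x : ℕ → Fin N → ℝ satisfies x_i(t) ≥ 0 and the linear recursion x_i(t+1) = (1 − μ_i)·x_i(t) + β_i r_i · Σ_j a_{ij} x_j(t). If p_i(0) ≤ x_i(0) for all i, then p_i(t) ≤ x_i(t) for all i and all t. -/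
lemma one_sub_prod_le_sum' {ι : Type*} [DecidableEq ι] (s : Finset ι) (c : ι → ℝ)
    (h0 : ∀ i ∈ s, 0 ≤ c i) (h1 : ∀ i ∈ s, c i ≤ 1) :
    1 - ∏ i ∈ s, (1 - c i) ≤ ∑ i ∈ s, c i := by
  induction s using Finset.induction with
  | empty => simp
  | @insert j s hj ih =>
    rw [Finset.prod_insert hj, Finset.sum_insert hj]
    have h0' : ∀ i ∈ s, 0 ≤ c i := fun i hi => h0 i (Finset.mem_insert_of_mem hi)
    have h1' : ∀ i ∈ s, c i ≤ 1 := fun i hi => h1 i (Finset.mem_insert_of_mem hi)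
    have ih' := ih h0' h1'
    have hP0 : 0 ≤ ∏ i ∈ s, (1 - c i) :=
      Finset.prod_nonneg fun i hi => by linarith [h1' i hi]
    have hP1 : ∏ i ∈ s, (1 - c i) ≤ 1 :=
      Finset.prod_le_one (fun i hi => by linarith [h1' i hi])
        (fun i hi => by linarith [h0' i hi])
    have hcj0 := h0 j (Finset.mem_insert_self j s)
    nlinarith

theorem sis_dominated_by_linear_dynamics (N : ℕ) (a : Fin N → Fin N → ℝ)
    (ha : ∀ i j, a i j = 0 ∨ a i j = 1) (μ β r : Fin N → ℝ)
    (hμ0 : ∀ i, 0 ≤ μ i) (hμ1 : ∀ i, μ i ≤ 1) (hβ : ∀ i, 0 ≤ β i) (hr : ∀ i, 0 ≤ r i)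
    (hβr : ∀ i, β i * r i ≤ 1) (p x : ℕ → Fin N → ℝ)
    (hp0 : ∀ t i, 0 ≤ p t i) (hp1 : ∀ t i, p t i ≤ 1)
    (hprec : ∀ t i, p (t + 1) i =
      (1 - μ i) * p t i + (1 - ∏ j, (1 - a i j * β i * r i * p t j)) * (1 - p t i))
    (hx0 : ∀ t i, 0 ≤ x t i)
    (hxrec : ∀ t i, x (t + 1) i = (1 - μ i) * x t i + β i * r i * ∑ j, a i j * x t j)
    (hinit : ∀ i, p 0 i ≤ x 0 i) :
    ∀ t i, p t i ≤ x t i := by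
  intro t
  induction t with
  | zero => exact hinit
  | succ t ih =>
    intro i
    rw [hprec t i, hxrec t i]
    have hc0 : ∀ j, 0 ≤ a i j * β i * r i * p t j := by
      intro j
      rcases ha i j with h | h <;> simp [h]
      have := hβ i; have := hr i; have := hp0 t j; positivity
    have hc1 : ∀ j, a i j * β i * r i * p t j ≤ 1 := by
      intro j
      rcases ha i j with h | h
      · simp [h]
      · simp only [h, one_mul]
        calc β i * r i * p t j ≤ 1 * 1 := by
              apply mul_le_one₀ (hβr i) (hp0 t j) ((hp1 t j).trans (le_refl 1)) |>.trans
              simp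
          _ = 1 := by ring
    have key : 1 - ∏ j, (1 - a i j * β i * r i * p t j) ≤ ∑ j, a i j * β i * r i * p t j :=
      one_sub_prod_le_sum' Finset.univ _ (fun j _ => hc0 j) (fun j _ => hc1 j)
    have hkey0 : 0 ≤ 1 - ∏ j, (1 - a i j * β i * r i * p t j) := by
      have : ∏ j, (1 - a i j * β i * r i * p t j) ≤ 1 :=
        Finset.prod_le_one (fun j _ => by linarith [hc1 j]) (fun j _ => by linarith [hc0 j])
      linarith
    have h1 : (1 - ∏ j, (1 - a i j * β i * r i * p t j)) * (1 - p t i)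
        ≤ ∑ j, a i j * β i * r i * p t j := by
      calc (1 - ∏ j, (1 - a i j * β i * r i * p t j)) * (1 - p t i)
          ≤ (1 - ∏ j, (1 - a i j * β i * r i * p t j)) * 1 := by
            apply mul_le_mul_of_nonneg_left _ hkey0
            linarith [hp0 t i]
        _ = 1 - ∏ j, (1 - a i j * (β i) * r i * p t j) := mul_one _
        _ ≤ _ := key
    have h2 : ∑ j, a i j * β i * r i * p t j ≤ β i * r i * ∑ j, a i j * x t j := by
      rw [Finset.mul_sum]
      apply Finset.sum_le_sum
      intro j _
      have haj : 0 ≤ a i j := by rcases ha i j with h | h <;> simp [h]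
      have : a i j * β i * r i * p t j ≤ a i j * β i * r i * x t j := by
        apply mul_le_mul_of_nonneg_left (ih j)
        have := hβ i; have := hr i; positivity
      linarith [this]
    have h3 : (1 - μ i) * p t i ≤ (1 - μ i) * x t i :=
      mul_le_mul_of_nonneg_left (ih i) (by linarith [hμ1 i])
    calc (1 - μ i) * p t i + (1 - ∏ j, (1 - a i j * β i * r i * p t j)) * (1 - p t i)
        ≤ (1 - μ i) * x t i + ∑ j, a i j * β i * r i * p t j := by linarith
      _ ≤ (1 - μ i) * x t i + β i * r i * ∑ j, a i j * x t j := by linarith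
end

section
/- (Extinction of the epidemic under the node-selection criterion) Let N be a natural number, let A : Matrix (Fin N) (Fin N) ℝ have entries in {0,1} with zero diagonal, and for each i let 0 < μ_i ≤ 1, β_i ≥ 0, r_i ≥ 0. Define H = 1 − diagonal μ + diagonal β * diagonal r * A. If every node satisfies the criterion β_i · r_i · Σ_j A_{ij} < μ_i, then for every initial state x₀ : Fin N → ℝ, the iterates H^t.mulVec x₀ of the linear dynamics x(t+1) = H x(t) tend to 0 as t → ∞; i.e., the extinction state is globally asymptotically stable for the bounding linear dynamics. -/
theorem sis_extinction_under_node_selection_criterion (N : ℕ)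
    (A : Matrix (Fin N) (Fin N) ℝ)
    (hA : ∀ i j, A i j = 0 ∨ A i j = 1) (hdiag : ∀ i, A i i = 0)
    (μ β r : Fin N → ℝ) (hμ0 : ∀ i, 0 < μ i) (hμ1 : ∀ i, μ i ≤ 1)
    (hβ : ∀ i, 0 ≤ β i) (hr : ∀ i, 0 ≤ r i)
    (hcrit : ∀ i, β i * r i * ∑ j, A i j < μ i)
    (H : Matrix (Fin N) (Fin N) ℝ)
    (hH : H = 1 - Matrix.diagonal μ + Matrix.diagonal β * Matrix.diagonal r * A)
    (x₀ : Fin N → ℝ) :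
    Filter.Tendsto (fun t : ℕ => (H ^ t).mulVec x₀) Filter.atTop (nhds 0) := by
  rcases Nat.eq_zero_or_pos N with hN | hN
  · subst hN
    have : (fun t : ℕ => (H ^ t).mulVec x₀) = fun _ => 0 := by
      funext t
      exact Subsingleton.elim _ _
    rw [this]
    exact tendsto_const_nhds
  -- entries of H
  have Hentry : ∀ i j, H i j = (if i = j then 1 - μ i else 0) + β i * r i * A i j := by
    intro i j
    rw [hH]
    simp [Matrix.add_apply, Matrix.sub_apply, Matrix.one_apply, Matrix.diagonal_apply,
      Matrix.diagonal_mul_diagonal, Matrix.diagonal_mul, mul_assoc]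
    split <;> simp
  have hnonneg : ∀ i j, 0 ≤ H i j := by
    intro i j
    rw [Hentry]
    have hAij : 0 ≤ A i j := by rcases hA i j with h | h <;> simp [h]
    have : 0 ≤ β i * r i * A i j := mul_nonneg (mul_nonneg (hβ i) (hr i)) hAij
    split
    · linarith [hμ1 i]
    · linarith
  have hrow : ∀ i, ∑ j, H i j = (1 - μ i) + β i * r i * ∑ j, A i j := by
    intro i
    simp only [Hentry]
    rw [Finset.sum_add_distrib, Finset.sum_ite_eq (Finset.univ) i (fun _ => 1 - μ i)]
    simp [Finset.mul_sum]
  have hrowlt : ∀ i, ∑ j, H i j < 1 := by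
    intro i
    rw [hrow i]
    linarith [hcrit i]
  haveI : Nonempty (Fin N) := Fin.pos_iff_nonempty.mp hN
  have hne : (Finset.univ : Finset (Fin N)).Nonempty := Finset.univ_nonempty
  set c : ℝ := Finset.univ.sup' hne (fun i => ∑ j, H i j) with hc
  have hc0 : 0 ≤ c := by
    obtain ⟨i, _⟩ := hne
    refine le_trans ?_ (Finset.le_sup' _ (Finset.mem_univ i))
    exact Finset.sum_nonneg fun j _ => hnonneg i j
  have hc1 : c < 1 := by
    rw [hc, Finset.sup'_lt_iff]
    intro i _
    exact hrowlt i
  -- contraction in sup norm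
  have key : ∀ x : Fin N → ℝ, ‖H.mulVec x‖ ≤ c * ‖x‖ := by
    intro x
    rw [pi_norm_le_iff_of_nonneg (by positivity)]
    intro i
    have h1 : ‖H.mulVec x i‖ ≤ ∑ j, H i j * ‖x j‖ := by
      rw [Matrix.mulVec, dotProduct]
      refine le_trans (norm_sum_le _ _) (Finset.sum_le_sum fun j _ => ?_)
      rw [norm_mul, Real.norm_of_nonneg (hnonneg i j)]
    have h2 : ∑ j, H i j * ‖x j‖ ≤ ∑ j, H i j * ‖x‖ := by
      refine Finset.sum_le_sum fun j _ => ?_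
      exact mul_le_mul_of_nonneg_left (norm_le_pi_norm x j) (hnonneg i j)
    have h3 : ∑ j, H i j * ‖x‖ = (∑ j, H i j) * ‖x‖ := by rw [Finset.sum_mul]
    have hle : ∑ j, H i j ≤ c := Finset.le_sup' (fun i => ∑ j, H i j) (Finset.mem_univ i)
    have h4 : (∑ j, H i j) * ‖x‖ ≤ c * ‖x‖ :=
      mul_le_mul_of_nonneg_right hle (norm_nonneg x)
    calc ‖H.mulVec x i‖ ≤ ∑ j, H i j * ‖x j‖ := h1
      _ ≤ ∑ j, H i j * ‖x‖ := h2
      _ = (∑ j, H i j) * ‖x‖ := h3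
      _ ≤ c * ‖x‖ := h4
  have bound : ∀ t : ℕ, ‖(H ^ t).mulVec x₀‖ ≤ c ^ t * ‖x₀‖ := by
    intro t
    induction t with
    | zero => simp
    | succ t ih =>
      have : (H ^ (t + 1)).mulVec x₀ = H.mulVec ((H ^ t).mulVec x₀) := by
        rw [pow_succ', Matrix.mulVec_mulVec]
      rw [this, pow_succ']
      calc ‖H.mulVec ((H ^ t).mulVec x₀)‖ ≤ c * ‖(H ^ t).mulVec x₀‖ := key _
        _ ≤ c * (c ^ t * ‖x₀‖) := mul_le_mul_of_nonneg_left ih hc0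
        _ = c * c ^ t * ‖x₀‖ := by ring
  have htend : Filter.Tendsto (fun t : ℕ => c ^ t * ‖x₀‖) Filter.atTop (nhds 0) := by
    have := (tendsto_pow_atTop_nhds_zero_of_lt_one hc0 hc1).mul_const ‖x₀‖
    simpa using this
  exact squeeze_zero_norm bound htend
end
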